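/- Let S be a finite semigroup, let x ∈ S and k > 1 be such that x^{2k} = x^k and there is no y ∈ S with y·x^k = x or x^k·y = x. For M ⊆ ℕ \ {1}, let S_M be the subsemigroup of ℕ × S generated by {(1, x^k)} ∪ {(m, x) : m ∈ M}. Then for distinct subsets M ≠ N of ℕ \ {1}, the semigroups S_M and S_N are not isomorphic; consequently ℕ × S contains uncountably many pairwise non-isomorphic subsemigroups. -/
import Mathlib


/-- `spow x n` is the `(n+1)`-st power of `x` in a semigroup. -/
def spow {S : Type*} [Semigroup S] (x : S) : ℕ → S
  | 0 => x
  | n + 1 => spow x n * x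

/-- For `M ⊆ ℕ \ {1}`, `SM x k M` is the subsemigroup of `ℕ × S` generated by
`{(1, x^k)} ∪ {(m, x) : m ∈ M}`, where `x^k = spow x (k-1)`. -/
def SM {S : Type*} [Semigroup S] (x : S) (k : ℕ) (M : Set ℕ+) :
    Subsemigroup (Multiplicative ℕ+ × S) :=
  Subsemigroup.closure
    ({(Multiplicative.ofAdd (1 : ℕ+), spow x (k - 1))} ∪
      {p | ∃ m ∈ M, p = (Multiplicative.ofAdd m, x)})

namespace SMaux

theorem spow_mul_spow {S : Type*} [Semigroup S] (x : S) (a b : ℕ) :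
    spow x a * spow x b = spow x (a + b + 1) := by
  induction b with
  | zero => rfl
  | succ b ih =>
    show spow x a * (spow x b * x) = spow x ((a + b + 1) + 1)
    rw [← mul_assoc, ih]
    rfl

theorem spow_spow {S : Type*} [Semigroup S] (x : S) (a b : ℕ) :
    spow (spow x a) b = spow x (a * b + a + b) := by
  induction b with
  | zero =>
    show spow x a = spow x (a * 0 + a + 0)
    norm_num
  | succ b ih =>
    show spow (spow x a) b * spow x a = _
    rw [ih, spow_mul_spow]
    congr 1
    ring

theorem map_spow {S T F : Type*} [Semigroup S] [Semigroup T] [FunLike F S T]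
    [MulHomClass F S T] (f : F) (s : S) (n : ℕ) : f (spow s n) = spow (f s) n := by
  induction n with
  | zero => rfl
  | succ n ih =>
    show f (spow s n * s) = spow (f s) n * f s
    rw [map_mul, ih]

theorem spow_val {A : Type*} [Semigroup A] {T : Subsemigroup A} (s : T) (n : ℕ) :
    ((spow s n : T) : A) = spow (s : A) n := by
  induction n with
  | zero => rfl
  | succ n ih =>
    show ((spow s n * s : T) : A) = spow (s : A) n * (s : A)
    rw [MulMemClass.coe_mul, ih]

/-- `pl n` is the set of elements expressible as a product of `n+1` elements. -/
def pl {T : Type*} [Mul T] : ℕ → Set T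
  | 0 => Set.univ
  | n + 1 => {s | ∃ a ∈ pl n, ∃ b, s = a * b}

theorem spow_mem_pl {T : Type*} [Semigroup T] (s : T) (n : ℕ) : spow s n ∈ pl n := by
  induction n with
  | zero => trivial
  | succ n ih => exact ⟨spow s n, ih, s, rfl⟩

theorem mem_pl_map {T T' : Type*} [Semigroup T] [Semigroup T'] (φ : T ≃* T') {n : ℕ} :
    ∀ {s : T}, s ∈ pl n → φ s ∈ pl n := by
  induction n with
  | zero => intro s _; trivial
  | succ n ih =>
    rintro s ⟨a, ha, b, rfl⟩
    exact ⟨φ a, ih ha, φ b, map_mul φ a b⟩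

section X

variable {S : Type*} [Semigroup S]

theorem spow_add_k (x : S) {k : ℕ} (hk : 1 < k)
    (hpow : spow x (2 * k - 1) = spow x (k - 1)) :
    ∀ a, k - 1 ≤ a → spow x (a + k) = spow x a := by
  intro a ha
  induction a, ha using Nat.le_induction with
  | base =>
    have h : k - 1 + k = 2 * k - 1 := by omega
    rw [h, hpow]
  | succ a ha ih =>
    have h : a + 1 + k = (a + k) + 1 := by omega
    rw [h]
    show spow x (a + k) * x = spow x a * x
    rw [ih]

theorem spow_ck (x : S) {k : ℕ} (hk : 1 < k)
    (hpow : spow x (2 * k - 1) = spow x (k - 1)) :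
    ∀ c, 1 ≤ c → spow x (c * k - 1) = spow x (k - 1) := by
  intro c hc
  induction c, hc using Nat.le_induction with
  | base => norm_num
  | succ c hc ih =>
    have hck : k ≤ c * k := Nat.le_mul_of_pos_left k hc
    have h1 : (c + 1) * k - 1 = (c * k - 1) + k := by
      have h2 : (c + 1) * k = c * k + k := by ring
      omega
    rw [h1, spow_add_k x hk hpow _ (by omega), ih]

theorem spow_ne_x (x : S) {k : ℕ} (hk : 1 < k)
    (hbad : ∀ y : S, y * spow x (k - 1) ≠ x ∧ spow x (k - 1) * y ≠ x) :
    ∀ a, 1 ≤ a → spow x a ≠ x := by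
  intro a ha h
  have key : ∀ c, 1 ≤ c → spow x (c * a) = x := by
    intro c hc
    induction c, hc using Nat.le_induction with
    | base => rw [one_mul]; exact h
    | succ c hc ih =>
      have h1 : (c + 1) * a = c * a + (a - 1) + 1 := by
        have h2 : (c + 1) * a = c * a + a := by ring
        omega
      rw [h1, ← spow_mul_spow, ih]
      calc x * spow x (a - 1) = spow x 0 * spow x (a - 1) := rfl
        _ = spow x (0 + (a - 1) + 1) := spow_mul_spow x 0 (a - 1)
        _ = spow x a := by congr 1; omega
        _ = x := h
  have hka : spow x (k * a) = x := key k (by omega)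
  have hkka : k ≤ k * a := Nat.le_mul_of_pos_right k ha
  have h2 : k * a = (k * a - k) + (k - 1) + 1 := by omega
  apply (hbad (spow x (k * a - k))).1
  rw [spow_mul_spow, ← h2]
  exact hka

end X

section Amb

variable {S : Type*} [Semigroup S]

/-- first coordinate of an element of `Multiplicative ℕ+ × S`, as a natural number -/
def p1 (v : Multiplicative ℕ+ × S) : ℕ := ((Multiplicative.toAdd v.1 : ℕ+) : ℕ)

theorem p1_mul (v w : Multiplicative ℕ+ × S) : p1 (v * w) = p1 v + p1 w := rfl

theorem p1_pos (v : Multiplicative ℕ+ × S) : 1 ≤ p1 v :=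
  (Multiplicative.toAdd v.1).property

theorem p1_spow (v : Multiplicative ℕ+ × S) (n : ℕ) :
    p1 (spow v n) = (n + 1) * p1 v := by
  induction n with
  | zero => show p1 v = 1 * p1 v; rw [one_mul]
  | succ n ih =>
    show p1 (spow v n * v) = _
    rw [p1_mul, ih]
    ring

theorem eq_of_p1 {v w : Multiplicative ℕ+ × S} (h1 : p1 v = p1 w) (h2 : v.2 = w.2) :
    v = w := by
  have h3 : Multiplicative.toAdd v.1 = Multiplicative.toAdd w.1 := PNat.coe_injective h1
  exact Prod.ext (Multiplicative.toAdd.injective h3) h2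

theorem spow_snd (v : Multiplicative ℕ+ × S) (n : ℕ) : (spow v n).2 = spow v.2 n := by
  induction n with
  | zero => rfl
  | succ n ih =>
    show (spow v n * v).2 = spow v.2 n * v.2
    rw [Prod.snd_mul, ih]

end Amb

section Main

variable {S : Type*} [Semigroup S]

/-- generating set of `SM x k M` -/
def gens (x : S) (k : ℕ) (M : Set ℕ+) : Set (Multiplicative ℕ+ × S) :=
  ({(Multiplicative.ofAdd (1 : ℕ+), spow x (k - 1))} ∪
    {p | ∃ m ∈ M, p = (Multiplicative.ofAdd m, x)})

theorem SM_eq (x : S) (k : ℕ) (M : Set ℕ+) :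
    SM x k M = Subsemigroup.closure (gens x k M) := rfl

theorem snd_form (x : S) {k : ℕ} (hk : 1 < k) (M : Set ℕ+)
    {v : Multiplicative ℕ+ × S} (hv : v ∈ SM x k M) :
    ∃ t : ℕ, 1 ≤ t ∧ v.2 = spow x (t - 1) := by
  rw [SM_eq] at hv
  induction hv using Subsemigroup.closure_induction with
  | mem v hv =>
    rcases hv with hv | ⟨m, _, rfl⟩
    · rw [Set.mem_singleton_iff] at hv
      exact ⟨k, by omega, by rw [hv]⟩
    · exact ⟨1, le_refl 1, rfl⟩
  | mul v w _ _ ihv ihw =>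
    obtain ⟨t1, ht1, h1⟩ := ihv
    obtain ⟨t2, ht2, h2⟩ := ihw
    refine ⟨t1 + t2, by omega, ?_⟩
    show v.2 * w.2 = _
    rw [h1, h2, spow_mul_spow]
    congr 1
    omega

theorem snd_prod_ne (x : S) {k : ℕ} (hk : 1 < k)
    (hbad : ∀ y : S, y * spow x (k - 1) ≠ x ∧ spow x (k - 1) * y ≠ x) (M : Set ℕ+)
    {v w : Multiplicative ℕ+ × S} (hv : v ∈ SM x k M) (hw : w ∈ SM x k M) :
    (v * w).2 ≠ x := by
  obtain ⟨t1, ht1, h1⟩ := snd_form x hk M hv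
  obtain ⟨t2, ht2, h2⟩ := snd_form x hk M hw
  show v.2 * w.2 ≠ x
  rw [h1, h2, spow_mul_spow]
  exact spow_ne_x x hk hbad _ (by omega)

theorem u_mem (x : S) (k : ℕ) (M : Set ℕ+) :
    (Multiplicative.ofAdd (1 : ℕ+), spow x (k - 1)) ∈ SM x k M :=
  Subsemigroup.subset_closure (Set.mem_union_left _ (Set.mem_singleton _))

theorem aux_idx (p q : ℕ) : p * q + p + q = (p + 1) * (q + 1) - 1 := by
  have h : (p + 1) * (q + 1) = p * q + p + q + 1 := by ring
  omega

theorem key_spow (x : S) {k : ℕ} (hk : 1 < k)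
    (hpow : spow x (2 * k - 1) = spow x (k - 1)) (M : Set ℕ+) (s : ↥(SM x k M)) :
    spow s (k - 1) =
      spow (⟨_, u_mem x k M⟩ : ↥(SM x k M)) (k * p1 (s : Multiplicative ℕ+ × S) - 1) := by
  obtain ⟨t, ht, hs2⟩ := snd_form x hk M s.2
  set A := p1 (s : Multiplicative ℕ+ × S) with hA
  have hA1 : 1 ≤ A := p1_pos _
  have hkA : 1 ≤ k * A := Nat.mul_pos (by omega) hA1
  have ek : k - 1 + 1 = k := Nat.sub_add_cancel (by omega)
  have ekA : k * A - 1 + 1 = k * A := Nat.sub_add_cancel hkA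
  apply Subtype.ext
  rw [spow_val, spow_val]
  apply eq_of_p1
  · rw [p1_spow, p1_spow]
    have hu : p1 ((Multiplicative.ofAdd (1 : ℕ+), spow x (k - 1)) : Multiplicative ℕ+ × S)
        = 1 := rfl
    rw [hu, ek, ekA, mul_one]
  · rw [spow_snd, spow_snd, hs2]
    show spow (spow x (t - 1)) (k - 1) = spow (spow x (k - 1)) (k * A - 1)
    rw [spow_spow, spow_spow]
    have idx1 : (t - 1) * (k - 1) + (t - 1) + (k - 1) = t * k - 1 := by
      rw [aux_idx, Nat.sub_add_cancel ht, ek]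
    have idx2 : (k - 1) * (k * A - 1) + (k - 1) + (k * A - 1) = (k * A) * k - 1 := by
      rw [aux_idx, ek, ekA, Nat.mul_comm]
    rw [idx1, idx2, spow_ck x hk hpow t ht, spow_ck x hk hpow (k * A) hkA]

theorem pl_bound (x : S) (k : ℕ) (M : Set ℕ+) :
    ∀ (n : ℕ) (s : ↥(SM x k M)), s ∈ pl n → n + 1 ≤ p1 (s : Multiplicative ℕ+ × S) := by
  intro n
  induction n with
  | zero => intro s _; exact p1_pos _
  | succ n ih =>
    rintro s ⟨a, ha, b, rfl⟩
    have h1 := ih a ha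
    have h2 := p1_pos (b : Multiplicative ℕ+ × S)
    have h3 : p1 ((a * b : ↥(SM x k M)) : Multiplicative ℕ+ × S)
        = p1 (a : Multiplicative ℕ+ × S) + p1 (b : Multiplicative ℕ+ × S) := rfl
    omega

theorem p1_le_iso (x : S) {k : ℕ} (hk : 1 < k)
    (hpow : spow x (2 * k - 1) = spow x (k - 1)) (M N : Set ℕ+)
    (φ : ↥(SM x k M) ≃* ↥(SM x k N)) (s : ↥(SM x k M)) :
    p1 (s : Multiplicative ℕ+ × S) ≤ p1 ((φ s : ↥(SM x k N)) : Multiplicative ℕ+ × S) := by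
  set A := p1 (s : Multiplicative ℕ+ × S) with hA
  have hA1 : 1 ≤ A := p1_pos _
  have hkA : 1 ≤ k * A := Nat.mul_pos (by omega) hA1
  have h1 : spow s (k - 1) = spow (⟨_, u_mem x k M⟩ : ↥(SM x k M)) (k * A - 1) :=
    key_spow x hk hpow M s
  have h2 : spow (φ s) (k - 1) ∈ pl (k * A - 1) := by
    have h3 := spow_mem_pl (⟨_, u_mem x k M⟩ : ↥(SM x k M)) (k * A - 1)
    rw [← h1] at h3
    have h4 := mem_pl_map φ h3
    rwa [map_spow] at h4
  have h5 := pl_bound x k N (k * A - 1) _ h2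
  rw [spow_val, p1_spow] at h5
  have ek : k - 1 + 1 = k := Nat.sub_add_cancel (by omega)
  have ekA : k * A - 1 + 1 = k * A := Nat.sub_add_cancel hkA
  rw [ek, ekA] at h5
  exact Nat.le_of_mul_le_mul_left h5 (by omega)

theorem p1_eq_iso (x : S) {k : ℕ} (hk : 1 < k)
    (hpow : spow x (2 * k - 1) = spow x (k - 1)) (M N : Set ℕ+)
    (φ : ↥(SM x k M) ≃* ↥(SM x k N)) (s : ↥(SM x k M)) :
    p1 ((φ s : ↥(SM x k N)) : Multiplicative ℕ+ × S) = p1 (s : Multiplicative ℕ+ × S) := by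
  refine le_antisymm ?_ (p1_le_iso x hk hpow M N φ s)
  have h := p1_le_iso x hk hpow N M φ.symm (φ s)
  rwa [φ.symm_apply_apply] at h

theorem mem_cases (x : S) (k : ℕ) (M : Set ℕ+) {v : Multiplicative ℕ+ × S}
    (hv : v ∈ SM x k M) :
    (v = (Multiplicative.ofAdd (1 : ℕ+), spow x (k - 1)) ∨
      ∃ m ∈ M, v = (Multiplicative.ofAdd m, x)) ∨
    ∃ a b, a ∈ SM x k M ∧ b ∈ SM x k M ∧ v = a * b := by
  rw [SM_eq] at hv
  induction hv using Subsemigroup.closure_induction with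
  | mem v hv =>
    left
    rcases hv with hv | hv
    · exact Or.inl (Set.mem_singleton_iff.mp hv)
    · exact Or.inr hv
  | mul v w hv hw _ _ =>
    right
    exact ⟨v, w, hv, hw, rfl⟩

theorem subset_of_iso (x : S) {k : ℕ} (hk : 1 < k)
    (hpow : spow x (2 * k - 1) = spow x (k - 1))
    (hbad : ∀ y : S, y * spow x (k - 1) ≠ x ∧ spow x (k - 1) * y ≠ x)
    {M N : Set ℕ+} (hM : M ⊆ {n : ℕ+ | n ≠ 1})
    (φ : ↥(SM x k M) ≃* ↥(SM x k N)) : M ⊆ N := by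
  intro m hm
  have hgm : (Multiplicative.ofAdd m, x) ∈ SM x k M :=
    Subsemigroup.subset_closure (Set.mem_union_right _ ⟨m, hm, rfl⟩)
  set g : ↥(SM x k M) := ⟨_, hgm⟩ with hg
  have hp1g : p1 (g : Multiplicative ℕ+ × S) = (m : ℕ) := rfl
  have hm2 : 2 ≤ (m : ℕ) := by
    have hne : (m : ℕ) ≠ 1 := by
      intro h
      exact hM hm (PNat.coe_injective (by simpa using h))
    have hpos : 0 < (m : ℕ) := m.property
    omega
  have hp1 : p1 ((φ g : ↥(SM x k N)) : Multiplicative ℕ+ × S) = (m : ℕ) := by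
    rw [p1_eq_iso x hk hpow M N φ g, hp1g]
  rcases mem_cases x k N (φ g).2 with hgen | ⟨a, b, ha, hb, hab⟩
  · rcases hgen with h1 | ⟨n, hn, h2⟩
    · exfalso
      rw [h1] at hp1
      have : (1 : ℕ) = (m : ℕ) := hp1
      omega
    · have hnm : (n : ℕ) = (m : ℕ) := by rw [h2] at hp1; exact hp1
      have : n = m := PNat.coe_injective hnm
      exact this ▸ hn
  · exfalso
    have hfg : φ g = (⟨a, ha⟩ : ↥(SM x k N)) * ⟨b, hb⟩ := Subtype.ext hab
    have hg2 : g = φ.symm ⟨a, ha⟩ * φ.symm ⟨b, hb⟩ := by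
      rw [← map_mul, ← hfg, φ.symm_apply_apply]
    have hx : x = (((φ.symm ⟨a, ha⟩ : ↥(SM x k M)) : Multiplicative ℕ+ × S) *
        ((φ.symm ⟨b, hb⟩ : ↥(SM x k M)) : Multiplicative ℕ+ × S)).2 := by
      have := congrArg (fun z : ↥(SM x k M) => (z : Multiplicative ℕ+ × S).2) hg2
      exact this
    exact snd_prod_ne x hk hbad M (φ.symm ⟨a, ha⟩).2 (φ.symm ⟨b, hb⟩).2 hx.symm

theorem main1 (x : S) {k : ℕ} (hk : 1 < k)
    (hpow : spow x (2 * k - 1) = spow x (k - 1))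
    (hbad : ∀ y : S, y * spow x (k - 1) ≠ x ∧ spow x (k - 1) * y ≠ x) :
    ∀ M N : Set ℕ+, M ⊆ {n : ℕ+ | n ≠ 1} → N ⊆ {n : ℕ+ | n ≠ 1} → M ≠ N →
      ¬ Nonempty (SM x k M ≃* SM x k N) := by
  rintro M N hM hN hMN ⟨φ⟩
  exact hMN (Set.Subset.antisymm (subset_of_iso x hk hpow hbad hM φ)
    (subset_of_iso x hk hpow hbad hN φ.symm))

end Main

end SMaux

/-- Let `S` be a finite semigroup, `x ∈ S` and `k > 1` with `x^(2k) = x^k`,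
and suppose no `y ∈ S` satisfies `y * x^k = x` or `x^k * y = x`.  Then for
distinct `M, N ⊆ ℕ \ {1}` the semigroups `S_M` and `S_N` are not isomorphic;
consequently `ℕ × S` contains uncountably many pairwise non-isomorphic
subsemigroups. -/
theorem SM_not_iso_and_uncountably_many
    {S : Type*} [Semigroup S] [Finite S] (x : S) (k : ℕ) (hk : 1 < k)
    (hpow : spow x (2 * k - 1) = spow x (k - 1))
    (hbad : ∀ y : S, y * spow x (k - 1) ≠ x ∧ spow x (k - 1) * y ≠ x) :
    (∀ M N : Set ℕ+, M ⊆ {n : ℕ+ | n ≠ 1} → N ⊆ {n : ℕ+ | n ≠ 1} → M ≠ N →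
        ¬ Nonempty (SM x k M ≃* SM x k N)) ∧
    ∃ F : Set (Subsemigroup (Multiplicative ℕ+ × S)), ¬ F.Countable ∧
      ∀ A ∈ F, ∀ B ∈ F, A ≠ B → ¬ Nonempty (A ≃* B) := by
  have main1 := SMaux.main1 x hk hpow hbad
  refine ⟨main1, {T | ∃ M ⊆ {n : ℕ+ | n ≠ 1}, T = SM x k M}, ?_, ?_⟩
  · intro hC
    set ι : Set {n : ℕ+ // n ≠ 1} → Subsemigroup (Multiplicative ℕ+ × S) :=
      fun 𝒜 => SM x k (Subtype.val '' 𝒜) with hι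
    have hsub : ∀ 𝒜 : Set {n : ℕ+ // n ≠ 1}, Subtype.val '' 𝒜 ⊆ {n : ℕ+ | n ≠ 1} := by
      rintro 𝒜 _ ⟨⟨n, hn⟩, _, rfl⟩
      exact hn
    have hinj : Function.Injective ι := by
      intro 𝒜 ℬ h
      have himg : Subtype.val '' 𝒜 = Subtype.val '' ℬ := by
        by_contra hne
        exact main1 _ _ (hsub 𝒜) (hsub ℬ) hne ⟨MulEquiv.subsemigroupCongr h⟩
      exact Set.image_injective.mpr Subtype.val_injective himg
    have hrange : Set.range ι ⊆ {T | ∃ M ⊆ {n : ℕ+ | n ≠ 1}, T = SM x k M} := by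
      rintro _ ⟨𝒜, rfl⟩
      exact ⟨_, hsub 𝒜, rfl⟩
    have hcrange : (Set.range ι).Countable := hC.mono hrange
    have hcnt : Countable (Set {n : ℕ+ // n ≠ 1}) := by
      have := hcrange.to_subtype
      exact Countable.of_equiv _ (Equiv.ofInjective ι hinj).symm
    have hinf : Infinite {n : ℕ+ // n ≠ 1} := by
      apply Infinite.of_injective
        (fun j : ℕ => (⟨⟨j + 2, by omega⟩, by
          intro h
          have h2 : ((⟨j + 2, by omega⟩ : ℕ+) : ℕ) = ((1 : ℕ+) : ℕ) := congrArg _ h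
          have h3 : j + 2 = 1 := h2
          omega⟩ : {n : ℕ+ // n ≠ 1}))
      intro a b h
      have : a + 2 = b + 2 := congrArg (fun z : {n : ℕ+ // n ≠ 1} => (z.val : ℕ)) h
      omega
    obtain ⟨f, hf⟩ := Countable.exists_injective_nat (Set {n : ℕ+ // n ≠ 1})
    have hemb := Infinite.natEmbedding {n : ℕ+ // n ≠ 1}
    exact Function.cantor_injective (fun t => hemb (f t)) (hemb.injective.comp hf)
  · rintro A ⟨MA, hMA, rfl⟩ B ⟨MB, hMB, rfl⟩ hAB
    exact main1 MA MB hMA hMB (fun h => hAB (by rw [h]))
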